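/- For every integer n ≥ 1, the number of big Schröder paths of length 2n is exactly twice the number of little Schröder paths of length 2n. -/

import Mathlib

/-- A step of a Schröder path: upstep, downstep, or a *double* horizontal step. -/
inductive SchStep : Type
  | up : SchStep
  | down : SchStep
  | horiz : SchStep
deriving DecidableEq

/-- The number of unit steps a step occupies: `horiz` is a double horizontal step. -/
def SchStep.len : SchStep → ℕ
  | .up => 1
  | .down => 1
  | .horiz => 2

/-- The change in height produced by a step. -/
def SchStep.rise : SchStep → ℤ
  | .up => 1
  | .down => -1
  | .horiz => 0

/-- The length of a path (a double horizontal step counts 2). -/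
def pathLen (p : List SchStep) : ℕ := (p.map SchStep.len).sum

/-- The final height of a path started at height 0. -/
def pathHeight (p : List SchStep) : ℤ := (p.map SchStep.rise).sum

/-- A big Schröder path: ends at height 0 and never goes below the x-axis. -/
def IsBigSchroeder (p : List SchStep) : Prop :=
  pathHeight p = 0 ∧ ∀ q : List SchStep, q <+: p → 0 ≤ pathHeight q

/-- A little Schröder path: a big Schröder path with no double horizontal step at
height 0. -/
def IsLittleSchroeder (p : List SchStep) : Prop :=
  IsBigSchroeder p ∧ ∀ q r : List SchStep, p = q ++ SchStep.horiz :: r → pathHeight q ≠ 0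

/-!
A big path with a horizontal step at height 0 splits at the last such step as `A ++ H :: B`,
with `A` big and `B` little; a nonempty little path splits at its first return to the axis as
`U :: A ++ D :: B`, with `A` big and `B` little. Both splittings are unique, so for `n ≥ 1` the
big paths that are not little and the little paths are both in bijection with the same set of
pairs `(A, B)`.
-/

instance : Fintype SchStep :=
  ⟨{.up, .down, .horiz}, fun s => by cases s <;> simp⟩

theorem List.append_cons_eq_append_cons {α : Type*} {s : α} {A B A' B' : List α}
    (h : A ++ s :: B = A' ++ s :: B') :
    (A = A' ∧ B = B') ∨ (∃ C, A' = A ++ s :: C ∧ B = C ++ s :: B') ∨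
      (∃ C, A = A' ++ s :: C ∧ B' = C ++ s :: B) := by
  rcases List.append_eq_append_iff.mp h with ⟨_ | ⟨t, C⟩, rfl, hB⟩ | ⟨_ | ⟨t, C⟩, rfl, hB⟩
  · simp_all
  · simp only [List.cons_append, List.cons.injEq] at hB
    obtain ⟨rfl, rfl⟩ := hB
    exact Or.inr (Or.inl ⟨C, rfl, rfl⟩)
  · simp_all
  · simp only [List.cons_append, List.cons.injEq] at hB
    obtain ⟨rfl, rfl⟩ := hB
    exact Or.inr (Or.inr ⟨C, rfl, rfl⟩)

@[simp] theorem pathHeight_nil : pathHeight [] = 0 := rfl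

@[simp] theorem pathHeight_cons (s : SchStep) (t : List SchStep) :
    pathHeight (s :: t) = s.rise + pathHeight t := by
  simp [pathHeight]

@[simp] theorem pathHeight_append (a b : List SchStep) :
    pathHeight (a ++ b) = pathHeight a + pathHeight b := by
  simp [pathHeight]

@[simp] theorem pathLen_cons (s : SchStep) (t : List SchStep) :
    pathLen (s :: t) = s.len + pathLen t := by
  simp [pathLen]

@[simp] theorem pathLen_append (a b : List SchStep) :
    pathLen (a ++ b) = pathLen a + pathLen b := by
  simp [pathLen]

theorem length_le_pathLen (p : List SchStep) : p.length ≤ pathLen p := by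
  induction p with
  | nil => simp
  | cons s t ih =>
    have : 1 ≤ s.len := by cases s <;> decide
    simp only [List.length_cons, pathLen_cons]
    omega

theorem finite_pathLen_eq (m : ℕ) : {p : List SchStep | pathLen p = m}.Finite :=
  (List.finite_length_le SchStep m).subset fun p hp => (length_le_pathLen p).trans_eq hp

def StaysAtLeast (h : ℤ) (p : List SchStep) : Prop :=
  ∀ q : List SchStep, q <+: p → h ≤ pathHeight q

def NoHorizAt (h : ℤ) (p : List SchStep) : Prop :=
  ∀ q r : List SchStep, p = q ++ SchStep.horiz :: r → pathHeight q ≠ h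

theorem StaysAtLeast.nonpos {h : ℤ} {p : List SchStep} (hp : StaysAtLeast h p) : h ≤ 0 :=
  hp [] List.nil_prefix

theorem StaysAtLeast.mono {h h' : ℤ} {p : List SchStep} (hp : StaysAtLeast h p) (hh : h' ≤ h) :
    StaysAtLeast h' p :=
  fun q hq => hh.trans (hp q hq)

theorem StaysAtLeast.noHorizAt {h h' : ℤ} {p : List SchStep} (hp : StaysAtLeast h p)
    (hh : h' < h) : NoHorizAt h' p := by
  rintro q r rfl
  have := hp q (List.prefix_append _ _)
  omega

theorem staysAtLeast_nil {h : ℤ} : StaysAtLeast h [] ↔ h ≤ 0 := by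
  simp [StaysAtLeast]

theorem staysAtLeast_cons {h : ℤ} {s : SchStep} {t : List SchStep} :
    StaysAtLeast h (s :: t) ↔ h ≤ 0 ∧ StaysAtLeast (h - s.rise) t := by
  simp [StaysAtLeast, List.prefix_cons_iff, or_imp, forall_and, forall_comm (α := List SchStep),
    add_comm]

theorem staysAtLeast_append {h : ℤ} {a b : List SchStep} :
    StaysAtLeast h (a ++ b) ↔ StaysAtLeast h a ∧ StaysAtLeast (h - pathHeight a) b := by
  induction a generalizing h with
  | nil => simpa [staysAtLeast_nil] using fun hb => hb.nonpos
  | cons s t ih => simp [staysAtLeast_cons, ih, and_assoc, sub_sub]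

theorem noHorizAt_nil {h : ℤ} : NoHorizAt h [] := by
  simp [NoHorizAt]

theorem noHorizAt_cons {h : ℤ} {s : SchStep} {t : List SchStep} :
    NoHorizAt h (s :: t) ↔ (s = .horiz → h ≠ 0) ∧ NoHorizAt (h - s.rise) t := by
  constructor
  · intro hp
    refine ⟨fun hs => ?_, fun q r hqr => ?_⟩
    · simpa [eq_comm] using hp [] t (by rw [hs]; rfl)
    · have := hp (s :: q) r (by simp [hqr])
      simp only [pathHeight_cons] at this
      omega
  · rintro ⟨hs, ht⟩ q r hqr
    rcases List.cons_eq_append_iff.mp hqr with ⟨rfl, hr⟩ | ⟨q, rfl, rfl⟩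
    · simpa [eq_comm] using hs (List.cons.inj hr).1.symm
    · have := ht q r rfl
      simp only [pathHeight_cons]
      omega

theorem noHorizAt_append {h : ℤ} {a b : List SchStep} :
    NoHorizAt h (a ++ b) ↔ NoHorizAt h a ∧ NoHorizAt (h - pathHeight a) b := by
  induction a generalizing h with
  | nil => simp [noHorizAt_nil]
  | cons s t ih => simp [noHorizAt_cons, ih, and_assoc, sub_sub]

theorem exists_eq_append_down_of_not_staysAtLeast {h : ℤ} {p : List SchStep} (h0 : h ≤ 0)
    (hp : ¬StaysAtLeast h p) :
    ∃ A B, p = A ++ .down :: B ∧ StaysAtLeast h A ∧ pathHeight A = h := by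
  induction p generalizing h with
  | nil => exact absurd (staysAtLeast_nil.mpr h0) hp
  | cons s t ih =>
    by_cases hs : h - s.rise ≤ 0
    · obtain ⟨A, B, rfl, hA, hA'⟩ :=
        ih hs fun ht => hp (staysAtLeast_cons.mpr ⟨h0, ht⟩)
      exact ⟨s :: A, B, rfl, staysAtLeast_cons.mpr ⟨h0, hA⟩, by simp [hA']⟩
    · have hs' : s = .down ∧ h = 0 := by
        cases s <;> simp only [SchStep.rise, reduceCtorEq, true_and, false_and] at hs ⊢ <;> omega
      obtain ⟨rfl, rfl⟩ := hs'
      exact ⟨[], t, rfl, staysAtLeast_nil.mpr le_rfl, rfl⟩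

theorem exists_eq_append_horiz_of_not_noHorizAt {h : ℤ} {p : List SchStep}
    (hp : ¬NoHorizAt h p) :
    ∃ A B, p = A ++ .horiz :: B ∧ pathHeight A = h ∧ NoHorizAt 0 B := by
  induction p generalizing h with
  | nil => exact absurd noHorizAt_nil hp
  | cons s t ih =>
    by_cases ht : NoHorizAt (h - s.rise) t
    · have hs : s = .horiz ∧ h = 0 := by
        by_contra hs
        exact hp (noHorizAt_cons.mpr ⟨fun h' => by tauto, ht⟩)
      obtain ⟨rfl, rfl⟩ := hs
      exact ⟨[], t, rfl, rfl, by simpa [SchStep.rise] using ht⟩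
    · obtain ⟨A, B, rfl, hA, hB⟩ := ih ht
      exact ⟨s :: A, B, rfl, by simp [hA], hB⟩

theorem append_down_inj {h : ℤ} {A B A' B' : List SchStep} (hA : pathHeight A = h)
    (hA' : pathHeight A' = h) (hsA : StaysAtLeast h A) (hsA' : StaysAtLeast h A')
    (heq : A ++ .down :: B = A' ++ .down :: B') : A = A' ∧ B = B' := by
  have not_extends : ∀ {A A' C : List SchStep}, pathHeight A = h → StaysAtLeast h A' →
      A' ≠ A ++ .down :: C := by
    rintro A _ C hA hsA' rfl
    have := hsA' (A ++ [.down]) (by simp)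
    simp [hA, SchStep.rise] at this
  rcases List.append_cons_eq_append_cons heq with h' | ⟨C, hC, -⟩ | ⟨C, hC, -⟩
  · exact h'
  · exact absurd hC (not_extends hA hsA')
  · exact absurd hC (not_extends hA' hsA)

theorem append_horiz_inj {A B A' B' : List SchStep} (hA : pathHeight A = pathHeight A')
    (hB : NoHorizAt 0 B) (hB' : NoHorizAt 0 B')
    (heq : A ++ .horiz :: B = A' ++ .horiz :: B') : A = A' ∧ B = B' := by
  rcases List.append_cons_eq_append_cons heq with h' | ⟨C, rfl, hC⟩ | ⟨C, rfl, hC⟩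
  · exact h'
  · exact absurd (by simpa [SchStep.rise] using hA) (hB C B' hC)
  · exact absurd (by simpa [SchStep.rise] using hA.symm) (hB' C B hC)

theorem isBigSchroeder_iff {p : List SchStep} :
    IsBigSchroeder p ↔ pathHeight p = 0 ∧ StaysAtLeast 0 p :=
  Iff.rfl

theorem isLittleSchroeder_iff {p : List SchStep} :
    IsLittleSchroeder p ↔ IsBigSchroeder p ∧ NoHorizAt 0 p :=
  Iff.rfl

def horizJoin (x : List SchStep × List SchStep) : List SchStep :=
  x.1 ++ .horiz :: x.2

def liftJoin (x : List SchStep × List SchStep) : List SchStep :=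
  .up :: (x.1 ++ .down :: x.2)

theorem pathLen_horizJoin (x : List SchStep × List SchStep) :
    pathLen (horizJoin x) = pathLen x.1 + pathLen x.2 + 2 := by
  simp only [horizJoin, pathLen_append, pathLen_cons, SchStep.len]
  omega

theorem pathLen_liftJoin (x : List SchStep × List SchStep) :
    pathLen (liftJoin x) = pathLen x.1 + pathLen x.2 + 2 := by
  simp only [liftJoin, pathLen_cons, pathLen_append, SchStep.len]
  omega

theorem IsBigSchroeder.horizJoin {x : List SchStep × List SchStep} (h₁ : IsBigSchroeder x.1)
    (h₂ : IsBigSchroeder x.2) : IsBigSchroeder (horizJoin x) := by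
  rw [isBigSchroeder_iff] at *
  simp [_root_.horizJoin, staysAtLeast_append, staysAtLeast_cons, SchStep.rise, h₁.1, h₁.2, h₂.1,
    h₂.2]

theorem IsLittleSchroeder.liftJoin {x : List SchStep × List SchStep} (h₁ : IsBigSchroeder x.1)
    (h₂ : IsLittleSchroeder x.2) : IsLittleSchroeder (liftJoin x) := by
  rw [isLittleSchroeder_iff, isBigSchroeder_iff] at *
  simp [_root_.liftJoin, staysAtLeast_append, staysAtLeast_cons, noHorizAt_append, noHorizAt_cons,
    SchStep.rise, h₁.1, h₂.1.1, h₂.1.2, h₂.2, h₁.2.mono, h₁.2.noHorizAt]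

theorem not_noHorizAt_horizJoin {x : List SchStep × List SchStep} (h : pathHeight x.1 = 0) :
    ¬NoHorizAt 0 (horizJoin x) :=
  fun hx => hx _ _ rfl h

theorem exists_horizJoin_eq {p : List SchStep} (hp : IsBigSchroeder p) (hh : ¬NoHorizAt 0 p) :
    ∃ x, IsBigSchroeder x.1 ∧ IsLittleSchroeder x.2 ∧ horizJoin x = p := by
  obtain ⟨A, B, rfl, hA, hB⟩ := exists_eq_append_horiz_of_not_noHorizAt hh
  rw [isBigSchroeder_iff, staysAtLeast_append, staysAtLeast_cons] at hp
  refine ⟨(A, B), ⟨hA, hp.2.1⟩, ⟨⟨?_, ?_⟩, hB⟩, rfl⟩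
  · simpa [hA, SchStep.rise] using hp.1
  · show StaysAtLeast 0 B
    simpa [hA, SchStep.rise] using hp.2.2.2

theorem exists_liftJoin_eq {p : List SchStep} (hp : IsLittleSchroeder p) (hne : p ≠ []) :
    ∃ x, IsBigSchroeder x.1 ∧ IsLittleSchroeder x.2 ∧ liftJoin x = p := by
  obtain ⟨s, t, rfl⟩ := List.exists_cons_of_ne_nil hne
  rw [isLittleSchroeder_iff, isBigSchroeder_iff, staysAtLeast_cons, noHorizAt_cons] at hp
  obtain ⟨⟨hheight, -, hstays⟩, hhoriz, hhoriz'⟩ := hp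
  obtain rfl : s = .up := by
    cases s
    · rfl
    · simpa [SchStep.rise] using hstays.nonpos
    · simp at hhoriz
  have ht : pathHeight t = -1 := by
    simp only [pathHeight_cons, SchStep.rise] at hheight
    omega
  obtain ⟨A, B, rfl, hsA, hA⟩ := exists_eq_append_down_of_not_staysAtLeast le_rfl
    fun h => by simpa [ht] using h t List.prefix_rfl
  simp only [SchStep.rise, staysAtLeast_append, staysAtLeast_cons, noHorizAt_append,
    noHorizAt_cons, pathHeight_append, pathHeight_cons, hA] at hstays hhoriz' ht
  have hsB : StaysAtLeast 0 B := by simpa using hstays.2.2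
  have hhB : NoHorizAt 0 B := by simpa using hhoriz'.2.2
  have hB : pathHeight B = 0 := by omega
  exact ⟨(A, B), ⟨hA, hsA⟩, ⟨⟨hB, hsB⟩, hhB⟩, rfl⟩

def bigPaths (m : ℕ) : Set (List SchStep) := {p | IsBigSchroeder p ∧ pathLen p = m}

def littlePaths (m : ℕ) : Set (List SchStep) := {p | IsLittleSchroeder p ∧ pathLen p = m}

def bigLittlePairs (m : ℕ) : Set (List SchStep × List SchStep) :=
  {x | IsBigSchroeder x.1 ∧ IsLittleSchroeder x.2 ∧ pathLen x.1 + pathLen x.2 + 2 = m}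

theorem bigPaths_eq_union (m : ℕ) :
    bigPaths m = littlePaths m ∪ horizJoin '' bigLittlePairs m := by
  ext p
  constructor
  · rintro ⟨hp, rfl⟩
    by_cases hh : NoHorizAt 0 p
    · exact Or.inl ⟨⟨hp, hh⟩, rfl⟩
    · obtain ⟨x, h₁, h₂, rfl⟩ := exists_horizJoin_eq hp hh
      exact Or.inr ⟨x, ⟨h₁, h₂, (pathLen_horizJoin x).symm⟩, rfl⟩
  · rintro (⟨hp, rfl⟩ | ⟨x, ⟨h₁, h₂, rfl⟩, rfl⟩)
    · exact ⟨hp.1, rfl⟩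
    · exact ⟨h₁.horizJoin h₂.1, pathLen_horizJoin x⟩

theorem disjoint_littlePaths_image_horizJoin (m : ℕ) :
    Disjoint (littlePaths m) (horizJoin '' bigLittlePairs m) := by
  rw [Set.disjoint_left]
  rintro _ ⟨hp, -⟩ ⟨x, ⟨h₁, -⟩, rfl⟩
  exact not_noHorizAt_horizJoin h₁.1 hp.2

theorem littlePaths_eq_image_liftJoin {m : ℕ} (hm : m ≠ 0) :
    littlePaths m = liftJoin '' bigLittlePairs m := by
  ext p
  constructor
  · rintro ⟨hp, rfl⟩
    obtain ⟨x, h₁, h₂, rfl⟩ := exists_liftJoin_eq hp (by rintro rfl; exact hm rfl)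
    exact ⟨x, ⟨h₁, h₂, (pathLen_liftJoin x).symm⟩, rfl⟩
  · rintro ⟨x, ⟨h₁, h₂, rfl⟩, rfl⟩
    exact ⟨h₂.liftJoin h₁, pathLen_liftJoin x⟩

theorem horizJoin_injOn (m : ℕ) : Set.InjOn horizJoin (bigLittlePairs m) := by
  rintro ⟨A, B⟩ ⟨hA, hB, -⟩ ⟨A', B'⟩ ⟨hA', hB', -⟩ heq
  obtain ⟨rfl, rfl⟩ := append_horiz_inj (hA.1.trans hA'.1.symm) hB.2 hB'.2 heq
  rfl

theorem liftJoin_injOn (m : ℕ) : Set.InjOn liftJoin (bigLittlePairs m) := by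
  rintro ⟨A, B⟩ ⟨hA, -⟩ ⟨A', B'⟩ ⟨hA', -⟩ heq
  obtain ⟨rfl, rfl⟩ := append_down_inj hA.1 hA'.1 hA.2 hA'.2 (List.cons.inj heq).2
  rfl

theorem ncard_bigPaths {m : ℕ} (hm : m ≠ 0) :
    (bigPaths m).ncard = 2 * (littlePaths m).ncard := by
  have hfin := finite_pathLen_eq m
  rw [bigPaths_eq_union, Set.ncard_union_eq (disjoint_littlePaths_image_horizJoin m)
      (hfin.subset fun p hp => hp.2) (hfin.subset ?_),
    (horizJoin_injOn m).ncard_image, littlePaths_eq_image_liftJoin hm,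
    (liftJoin_injOn m).ncard_image]
  · ring
  · rintro _ ⟨x, ⟨-, -, hx⟩, rfl⟩
    exact (pathLen_horizJoin x).trans hx

/-- For `n ≥ 1`, there are twice as many big Schröder paths of length `2n` as little
Schröder paths of length `2n`. -/
theorem big_eq_two_mul_little (n : ℕ) (hn : 1 ≤ n) :
    Nat.card {p : List SchStep // IsBigSchroeder p ∧ pathLen p = 2 * n} =
      2 * Nat.card {p : List SchStep // IsLittleSchroeder p ∧ pathLen p = 2 * n} :=
  ncard_bigPaths (by omega)
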